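/- With f as in the previous statement (f(x) = (8/3)(1-x)^{3/2} for x ≤ 0, f(x) = 8/3 - 4x + x² + x³/6 + x⁴/16 for x > 0), there do NOT exist c ≥ 0, a function f₊ ∈ C² with f₊ and f₊'' nondecreasing and convex, and a function f₋ ∈ C² with f₋ and f₋'' nonincreasing and convex, such that f(x) = c·x²/2 + f₊(x) + f₋(x) for all x ∈ ℝ. -/

import Mathlib

/-!
Take second differences `Δg x = g (x + 1) - 2 g x + g (x - 1)` at `x → -∞`. There `Δ fEx x = O(1/√|x|)`,
while `Δ (c x²/2) = c` and `Δ f₊, Δ f₋ ≥ 0` by convexity; hence `c = 0`. Since `f₋''` is nonincreasing,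
`Δ f₋ x ≥ f₋'' (x + 1)`, so `f₋'' ≤ 0` everywhere and `f₋` is concave, hence at most affine as `x → -∞`,
and `f₊ x ≤ f₊ 0` for `x ≤ 0`. This bounds `fEx` above by an affine function at `-∞`, contradicting
`fEx x = (8/3)(1 - x)^{3/2}` there.
-/

open Real Filter Topology Set

noncomputable def fEx (x : ℝ) : ℝ :=
  if x ≤ 0 then (8 / 3) * (1 - x) ^ ((3 : ℝ) / 2)
  else 8 / 3 - 4 * x + x ^ 2 + (1 / 6) * x ^ 3 + (1 / 16) * x ^ 4

def secondDiff (f : ℝ → ℝ) (x : ℝ) : ℝ := f (x + 1) - 2 * f x + f (x - 1)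

theorem ConvexOn.secondDiff_nonneg {f : ℝ → ℝ} (hf : ConvexOn ℝ univ f) (x : ℝ) :
    0 ≤ secondDiff f x := by
  have h := hf.2 (mem_univ (x - 1)) (mem_univ (x + 1)) (by norm_num : (0 : ℝ) ≤ 1 / 2)
    (by norm_num : (0 : ℝ) ≤ 1 / 2) (by norm_num)
  simp only [smul_eq_mul] at h
  rw [show 1 / 2 * (x - 1) + 1 / 2 * (x + 1) = x by ring] at h
  unfold secondDiff
  linarith

theorem exists_secondDiff_eq_deriv_deriv {f : ℝ → ℝ} (hf : Differentiable ℝ f)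
    (hf' : Differentiable ℝ (deriv f)) (x : ℝ) :
    ∃ η ∈ Ioo (x - 1) (x + 1), secondDiff f x = deriv (deriv f) η := by
  set g : ℝ → ℝ := fun t => f (t + 1) - f t
  have hg : ∀ t, HasDerivAt g (deriv f (t + 1) - deriv f t) t := fun t =>
    ((hf (t + 1)).hasDerivAt.comp_add_const t 1).sub (hf t).hasDerivAt
  have hg_diff : Differentiable ℝ g := fun t => (hg t).differentiableAt
  obtain ⟨ξ, hξ, hξ_eq⟩ := exists_deriv_eq_slope g (sub_one_lt x)
    hg_diff.continuous.continuousOn hg_diff.differentiableOn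
  obtain ⟨η, hη, hη_eq⟩ := exists_deriv_eq_slope (deriv f) (lt_add_one ξ)
    hf'.continuous.continuousOn hf'.differentiableOn
  refine ⟨η, ⟨by linarith [hξ.1, hη.1], by linarith [hξ.2, hη.2]⟩, ?_⟩
  rw [hη_eq, ← (hg ξ).deriv, hξ_eq]
  simp only [g, secondDiff, sub_sub_cancel, add_sub_cancel_left, div_one, sub_add_cancel]
  ring

theorem deriv_deriv_add_one_le_secondDiff {f : ℝ → ℝ} (hf : Differentiable ℝ f)
    (hf' : Differentiable ℝ (deriv f)) (hf'' : Antitone (deriv (deriv f))) (x : ℝ) :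
    deriv (deriv f) (x + 1) ≤ secondDiff f x := by
  obtain ⟨η, hη, h⟩ := exists_secondDiff_eq_deriv_deriv hf hf' x
  exact h ▸ hf'' hη.2.le

theorem ConcaveOn.le_secant_of_lt_of_lt {f : ℝ → ℝ} (hf : ConcaveOn ℝ univ f) {x a b : ℝ}
    (hxa : x < a) (hab : a < b) : f x ≤ f a + (f b - f a) / (b - a) * (x - a) := by
  have h := hf.slope_anti_adjacent (mem_univ x) (mem_univ b) hxa hab
  rw [le_div_iff₀ (sub_pos.2 hxa)] at h
  linarith

theorem fEx_of_nonpos {x : ℝ} (hx : x ≤ 0) : fEx x = 8 / 3 * ((1 - x) * √(1 - x)) := by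
  rw [fEx, if_pos hx, show (3 : ℝ) / 2 = 1 + 1 / 2 by norm_num,
    rpow_add' (by linarith) (by norm_num), rpow_one, sqrt_eq_rpow]

theorem mul_sqrt_secondDiff_le {t : ℝ} (ht : 2 ≤ t) :
    (t + 1) * √(t + 1) - 2 * (t * √t) + (t - 1) * √(t - 1) ≤ 3 / √t := by
  set s₂ := √(t + 1)
  set s := √t
  set s₀ := √(t - 1)
  have e₂ : s₂ ^ 2 = t + 1 := sq_sqrt (by linarith)
  have e : s ^ 2 = t := sq_sqrt (by linarith)
  have e₀ : s₀ ^ 2 = t - 1 := sq_sqrt (by linarith)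
  have h₀ : 1 ≤ s₀ := one_le_sqrt.2 (by linarith)
  have h₀₁ : s₀ ≤ s := sqrt_le_sqrt (by linarith)
  have h₁₂ : s ≤ s₂ := sqrt_le_sqrt (by linarith)
  rw [le_div_iff₀ (by linarith), ← e₂, ← e₀, ← e]
  have key : s * (s₂ ^ 3 + s₀ ^ 3 - 2 * s ^ 3) ≤ 3 := by
    nlinarith [mul_pos (by linarith : (0 : ℝ) < s) (by linarith : (0 : ℝ) < s₂),
      sq_nonneg (s₂ - s), sq_nonneg (s - s₀), sq_nonneg (s₂ - s₀),
      mul_nonneg (by linarith : (0 : ℝ) ≤ s₂ - s) (sq_nonneg (s₂ - s)),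
      mul_nonneg (by linarith : (0 : ℝ) ≤ s - s₀) (sq_nonneg (s - s₀))]
  nlinarith [key]

theorem secondDiff_fEx_le {x : ℝ} (hx : x ≤ -1) : secondDiff fEx x ≤ 8 / √(1 - x) := by
  have h := mul_sqrt_secondDiff_le (show 2 ≤ 1 - x by linarith)
  rw [secondDiff, fEx_of_nonpos (by linarith), fEx_of_nonpos (by linarith),
    fEx_of_nonpos (by linarith)]
  rw [show 1 - (x - 1) = 1 - x + 1 by ring, show 1 - (x + 1) = 1 - x - 1 by ring]
  calc _ = 8 / 3 * ((1 - x + 1) * √(1 - x + 1) - 2 * ((1 - x) * √(1 - x))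
          + (1 - x - 1) * √(1 - x - 1)) := by ring
    _ ≤ 8 / 3 * (3 / √(1 - x)) := by gcongr
    _ = 8 / √(1 - x) := by ring

theorem tendsto_sqrt_one_sub_atBot : Tendsto (fun x : ℝ => √(1 - x)) atBot atTop :=
  tendsto_sqrt_atTop.comp (tendsto_atTop_add_const_left _ 1 tendsto_neg_atBot_atTop)

theorem tendsto_eight_div_sqrt_one_sub_atBot :
    Tendsto (fun x : ℝ => 8 / √(1 - x)) atBot (𝓝 0) :=
  tendsto_const_nhds.div_atTop tendsto_sqrt_one_sub_atBot

theorem not_eventually_fEx_le_affine (a b : ℝ) : ¬ ∀ᶠ x in atBot, fEx x ≤ a + b * x := by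
  intro h
  obtain ⟨x, hfx, hx, hsqrt⟩ := (h.and ((eventually_le_atBot 0).and
    (tendsto_sqrt_one_sub_atBot.eventually_gt_atTop (|a + b| + |b|)))).exists
  have hx1 : 1 ≤ 1 - x := by linarith
  have h_affine : a + b * x ≤ (|a + b| + |b|) * (1 - x) := by
    nlinarith [le_abs_self (a + b), neg_abs_le b, abs_nonneg (a + b), abs_nonneg b]
  rw [fEx_of_nonpos hx] at hfx
  linarith [mul_lt_mul_of_pos_left hsqrt (by linarith : (0 : ℝ) < 1 - x),
    mul_nonneg (by linarith : (0 : ℝ) ≤ 1 - x) (sqrt_nonneg (1 - x))]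

/-- `fEx` cannot be written as `c·x²/2 + f₊(x) + f₋(x)` with `c ≥ 0`,
`f₊ ∈ F₊³` (C², with `f₊` and `f₊''` nondecreasing and convex) and
`f₋ ∈ F₋³` (C², with `f₋` and `f₋''` nonincreasing and convex). -/
theorem fEx_not_in_GG3 :
    ¬ ∃ (c : ℝ) (fp fm : ℝ → ℝ), 0 ≤ c ∧
      ContDiff ℝ 2 fp ∧ Monotone fp ∧ ConvexOn ℝ Set.univ fp ∧
        Monotone (deriv (deriv fp)) ∧ ConvexOn ℝ Set.univ (deriv (deriv fp)) ∧
      ContDiff ℝ 2 fm ∧ Antitone fm ∧ ConvexOn ℝ Set.univ fm ∧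
        Antitone (deriv (deriv fm)) ∧ ConvexOn ℝ Set.univ (deriv (deriv fm)) ∧
      ∀ x : ℝ, fEx x = c * x ^ 2 / 2 + fp x + fm x := by
  rintro ⟨c, fp, fm, hc, -, hfp_mono, hfp_conv, -, -, hfm, -, hfm_conv, hfm''_anti, -, heq⟩
  have hfm' : Differentiable ℝ fm := hfm.differentiable (by norm_num)
  have hfm'' : Differentiable ℝ (deriv fm) := (hfm.iterate_deriv' 1 1).differentiable (by norm_num)
  have hΔ : ∀ᶠ x in atBot, c + secondDiff fp x + secondDiff fm x ≤ 8 / √(1 - x) := by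
    filter_upwards [eventually_le_atBot (-1)] with x hx
    convert secondDiff_fEx_le hx using 1
    simp only [secondDiff, heq]
    ring
  have hc0 : c ≤ 0 := ge_of_tendsto tendsto_eight_div_sqrt_one_sub_atBot <| by
    filter_upwards [hΔ] with x hx
    linarith [hfp_conv.secondDiff_nonneg x, hfm_conv.secondDiff_nonneg x]
  have hfm_conc : ConcaveOn ℝ univ fm := concaveOn_univ_of_deriv2_nonpos hfm' hfm'' fun y =>
    ge_of_tendsto tendsto_eight_div_sqrt_one_sub_atBot <| by
      filter_upwards [hΔ, eventually_le_atBot (y - 1)] with x hx hxy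
      show deriv (deriv fm) y ≤ _
      linarith [hfm''_anti (show x + 1 ≤ y by linarith), hfp_conv.secondDiff_nonneg x,
        deriv_deriv_add_one_le_secondDiff hfm' hfm'' hfm''_anti x]
  refine not_eventually_fEx_le_affine (fp 0 + fm 0) (fm 0 - fm (-1)) ?_
  filter_upwards [eventually_lt_atBot (-1)] with x hx
  have hfm_le := hfm_conc.le_secant_of_lt_of_lt hx (show (-1 : ℝ) < 0 by norm_num)
  rw [heq]
  nlinarith [hfp_mono (show x ≤ 0 by linarith), mul_nonpos_of_nonpos_of_nonneg hc0 (sq_nonneg x)]
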